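/- arXiv:2002.09579 — 2 statements merged into one kernel-verified Lean document; each statement's English description precedes it below -/
import Mathlib

section
/- Let V be a real vector space, let x ∈ V, let Δ₁, …, Δ_m ∈ V, and let D be a positive natural number. Define v_i = x + D · Δ_i for i = 1, …, m, where D · Δ_i denotes scalar multiplication by the real number D. Then for every subset s ⊆ {1, …, m} with |s| ≤ D, the point x + Σ_{i∈s} Δ_i lies in the convex hull (over ℝ) of the set {x, v₁, …, v_m}. -/
/-!
With weights `1 / D` on the points `vᵢ - x = D • Δᵢ`, the point `x + ∑_{i ∈ s} Δᵢ` is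
`x + ∑_{i ∈ s} (1 / D) • (vᵢ - x)`, whose weights add up to `|s| / D ≤ 1`. The missing weight
`1 - |s| / D` goes to `x` itself, which makes it a convex combination of `x` and the `vᵢ`.
-/

open Finset

section
variable {𝕜 E ι : Type*} [Field 𝕜] [LinearOrder 𝕜] [IsStrictOrderedRing 𝕜]
  [AddCommGroup E] [Module 𝕜 E]

theorem Convex.add_sum_smul_sub_mem {K : Set E} (hK : Convex 𝕜 K) {x : E} (hx : x ∈ K)
    {t : Finset ι} {w : ι → 𝕜} {z : ι → E} (hw₀ : ∀ i ∈ t, 0 ≤ w i)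
    (hw₁ : ∑ i ∈ t, w i ≤ 1) (hz : ∀ i ∈ t, z i ∈ K) :
    x + ∑ i ∈ t, w i • (z i - x) ∈ K := by
  set W := ∑ i ∈ t, w i
  rcases (sum_nonneg hw₀).eq_or_lt with hW | hW
  · have hw : ∀ i ∈ t, w i = 0 := (sum_eq_zero_iff_of_nonneg hw₀).mp hW.symm
    rw [sum_eq_zero fun i hi => by rw [hw i hi, zero_smul], add_zero]
    exact hx
  · have hc : t.centerMass w z ∈ K := hK.centerMass_mem hw₀ hW hz
    have hWc : W • t.centerMass w z = ∑ i ∈ t, w i • z i := smul_inv_smul₀ hW.ne' _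
    have hsum : ∑ i ∈ t, w i • (z i - x) = ∑ i ∈ t, w i • z i - W • x := by
      simp only [smul_sub, sum_sub_distrib, W, sum_smul]
    convert hK hx hc (sub_nonneg.mpr hw₁) hW.le (sub_add_cancel 1 W) using 1
    rw [hsum, hWc]
    module

theorem add_sum_mem_convexHull_insert_add_smul (x : E) (Δ : ι → E) (s : Finset ι) {D : 𝕜}
    (hs : (#s : 𝕜) ≤ D) :
    x + ∑ i ∈ s, Δ i ∈ convexHull 𝕜 (insert x ((fun i => x + D • Δ i) '' s)) := by
  rcases s.eq_empty_or_nonempty with rfl | hne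
  · simp
  have hD : 0 < D := (Nat.cast_pos.mpr hne.card_pos).trans_le hs
  have hΔ : ∀ i, Δ i = D⁻¹ • ((x + D • Δ i) - x) := fun i => by
    rw [add_sub_cancel_left, inv_smul_smul₀ hD.ne']
  rw [sum_congr rfl fun i _ => hΔ i]
  refine (convex_convexHull 𝕜 _).add_sum_smul_sub_mem
    (subset_convexHull 𝕜 _ (Set.mem_insert x _)) (fun _ _ => inv_nonneg.mpr hD.le) ?_
    fun i hi => subset_convexHull 𝕜 _ (Set.mem_insert_of_mem x ⟨i, hi, rfl⟩)
  rw [sum_const, nsmul_eq_mul, ← div_eq_mul_inv]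
  exact (div_le_one hD).mpr hs

end

theorem perturbed_point_mem_convexHull_dilated_general
    {V : Type*} [AddCommGroup V] [Module ℝ V]
    (x : V) {m : ℕ} (Δ : Fin m → V) (D : ℕ)
    (v : Fin m → V) (hv : ∀ i, v i = x + (D : ℝ) • Δ i)
    (s : Finset (Fin m)) (hs : s.card ≤ D) :
    x + ∑ i ∈ s, Δ i ∈ convexHull ℝ ({x} ∪ Set.range v) := by
  refine convexHull_mono ?_ (add_sum_mem_convexHull_insert_add_smul x Δ s (D := (D : ℝ))
    (by exact_mod_cast hs))
  rintro _ (rfl | ⟨i, -, rfl⟩)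
  · exact Or.inl rfl
  · exact Or.inr ⟨i, hv i⟩

/-- For dilated points `vᵢ = x + D • Δᵢ`, every point `x + Σ_{i ∈ s} Δᵢ` with
`|s| ≤ D` lies in the convex hull of `{x, v₁, …, v_m}`. -/
theorem perturbed_point_mem_convexHull_dilated
    {V : Type*} [AddCommGroup V] [Module ℝ V]
    (x : V) {m : ℕ} (Δ : Fin m → V) (D : ℕ) (hD : 0 < D)
    (v : Fin m → V) (hv : ∀ i, v i = x + (D : ℝ) • Δ i)
    (s : Finset (Fin m)) (hs : s.card ≤ D) :
    x + ∑ i ∈ s, Δ i ∈ convexHull ℝ ({x} ∪ Set.range v) :=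
  perturbed_point_mem_convexHull_dilated_general x Δ D v hv s hs
end

section
/- Let d and m be natural numbers, let x : Fin m → ℝ^d, let P be a finite set of functions Fin m → ℝ^d, and let D be a positive natural number. Suppose y : Fin m → ℝ^d is such that there exist a natural number k ≤ D, pairwise disjoint subsets B₁, …, B_k of Fin m, and elements z₁, …, z_k of P such that: for each i, z_i agrees with y on B_i and agrees with x outside B_i; and x agrees with y outside ⋃_{i=1}^k B_i. Then, viewing functions Fin m → ℝ^d as elements of the real vector space of functions Fin m → ℝ^d with pointwise operations, y lies in the convex hull (over ℝ) of the set {x} ∪ {x + D · (z − x) : z ∈ P}, where D · v denotes scalar multiplication by the real number D. -/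
/-!
On each block `B i` only the edit `z i` differs from `x`, and off the blocks `y = x`, so the
disjointness of the blocks gives `y = x + ∑ i, (z i - x)`. With `k ≤ D` edits this is the convex
combination `(1 - k / D) • x + ∑ i, (1 / D) • (x + D • (z i - x))` of points of the dilated set.
-/

open Finset

theorem eq_add_sum_sub_of_pairwise_disjoint {ι α M : Type*} [Fintype ι] [AddCommGroup M]
    {x y : α → M} {z : ι → α → M} {B : ι → Set α} (hB : Pairwise (Function.onFun Disjoint B))
    (hzy : ∀ i, ∀ j ∈ B i, z i j = y j) (hzx : ∀ i, ∀ j ∉ B i, z i j = x j)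
    (hxy : ∀ j ∉ ⋃ i, B i, x j = y j) :
    y = x + ∑ i, (z i - x) := by
  funext j
  simp only [Pi.add_apply, Finset.sum_apply, Pi.sub_apply]
  by_cases hj : j ∈ ⋃ i, B i
  · obtain ⟨i₀, hi₀⟩ := Set.mem_iUnion.mp hj
    have hothers : ∀ i ≠ i₀, z i j - x j = 0 := fun i hi =>
      sub_eq_zero.mpr (hzx i j fun hmem => Set.disjoint_left.mp (hB hi) hmem hi₀)
    rw [Finset.sum_eq_single_of_mem i₀ (mem_univ _) fun i _ hi => hothers i hi, hzy i₀ j hi₀,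
      add_sub_cancel]
  · have hunchanged : ∀ i, z i j - x j = 0 := fun i =>
      sub_eq_zero.mpr (hzx i j fun hmem => hj (Set.mem_iUnion.mpr ⟨i, hmem⟩))
    rw [sum_eq_zero fun i _ => hunchanged i, add_zero, hxy j hj]

theorem add_sum_mem_convexHull {ι E : Type*} [Fintype ι] [AddCommGroup E] [Module ℝ E]
    (x : E) (v : ι → E) {D : ℝ} (hD : (Fintype.card ι : ℝ) ≤ D) :
    x + ∑ i, v i ∈ convexHull ℝ (insert x (Set.range fun i => x + D • v i)) := by
  rcases isEmpty_or_nonempty ι with hι | hι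
  · simpa using subset_convexHull ℝ _ (Set.mem_insert x _)
  have hDpos : 0 < D := lt_of_lt_of_le (by exact_mod_cast Fintype.card_pos) hD
  set k : ℝ := (Fintype.card ι : ℝ)
  let w : Option ι → ℝ := fun o => o.elim (1 - k / D) fun _ => 1 / D
  let p : Option ι → E := fun o => o.elim x fun i => x + D • v i
  have hcomb : ∑ o, w o • p o = x + ∑ i, v i := by
    have hterm : ∀ i, (1 / D) • (x + D • v i) = (1 / D) • x + v i := fun i => by
      rw [smul_add, smul_smul, one_div_mul_cancel hDpos.ne', one_smul]
    simp only [Fintype.sum_option, w, p, Option.elim, hterm, sum_add_distrib, sum_const,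
      card_univ, ← Nat.cast_smul_eq_nsmul ℝ, smul_smul, ← add_assoc, ← add_smul]
    rw [show 1 - k / D + k * (1 / D) = 1 by ring, one_smul]
  rw [← hcomb]
  refine (convex_convexHull ℝ _).sum_mem ?_ ?_ ?_
  · rintro (_ | i) -
    · exact sub_nonneg.mpr ((div_le_one hDpos).mpr hD)
    · exact one_div_nonneg.mpr hDpos.le
  · simp only [Fintype.sum_option, w, Option.elim, sum_const, card_univ, nsmul_eq_mul]
    ring
  · rintro (_ | i) -
    · exact subset_convexHull ℝ _ (Set.mem_insert x _)
    · exact subset_convexHull ℝ _ (Set.mem_insert_of_mem x ⟨i, rfl⟩)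

theorem abstraction_soundness_general
    {d m : ℕ} (x : Fin m → Fin d → ℝ)
    (P : Finset (Fin m → Fin d → ℝ)) (D : ℕ)
    (y : Fin m → Fin d → ℝ)
    (h : ∃ (k : ℕ), k ≤ D ∧
      ∃ (B : Fin k → Set (Fin m)) (z : Fin k → Fin m → Fin d → ℝ),
        Pairwise (Function.onFun Disjoint B) ∧
        (∀ i, z i ∈ P) ∧
        (∀ i, ∀ j ∈ B i, z i j = y j) ∧
        (∀ i, ∀ j, j ∉ B i → z i j = x j) ∧
        (∀ j : Fin m, j ∉ ⋃ i, B i → x j = y j)) :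
    y ∈ convexHull ℝ
      ({x} ∪ {w : Fin m → Fin d → ℝ | ∃ z ∈ P, w = x + (D : ℝ) • (z - x)}) := by
  obtain ⟨k, hkD, B, z, hB, hzP, hzy, hzx, hxy⟩ := h
  rw [eq_add_sum_sub_of_pairwise_disjoint hB hzy hzx hxy]
  refine convexHull_mono ?_ (add_sum_mem_convexHull x (fun i => z i - x) (D := D)
    (by simpa using hkD))
  rintro _ (rfl | ⟨i, rfl⟩)
  · exact Or.inl rfl
  · exact Or.inr ⟨z i, hzP i, rfl⟩

/-- Soundness of the abstraction: if `y` is obtained from `x` by at most `D`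
non-overlapping single-transformation edits, each single edit `zᵢ` drawn from the
set `P` of singly-perturbed samples, then `y` lies in the convex hull of `{x}`
together with the dilated points `x + D • (z - x)` for `z ∈ P`. -/
theorem abstraction_soundness
    {d m : ℕ} (x : Fin m → Fin d → ℝ)
    (P : Finset (Fin m → Fin d → ℝ)) (D : ℕ) (hD : 0 < D)
    (y : Fin m → Fin d → ℝ)
    (h : ∃ (k : ℕ), k ≤ D ∧
      ∃ (B : Fin k → Set (Fin m)) (z : Fin k → Fin m → Fin d → ℝ),
        Pairwise (Function.onFun Disjoint B) ∧
        (∀ i, z i ∈ P) ∧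
        (∀ i, ∀ j ∈ B i, z i j = y j) ∧
        (∀ i, ∀ j, j ∉ B i → z i j = x j) ∧
        (∀ j : Fin m, j ∉ ⋃ i, B i → x j = y j)) :
    y ∈ convexHull ℝ
      ({x} ∪ {w : Fin m → Fin d → ℝ | ∃ z ∈ P, w = x + (D : ℝ) • (z - x)}) :=
  abstraction_soundness_general x P D y h
end
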